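/- arXiv:1411.3035 — 3 statements merged into one kernel-verified Lean document; each statement's English description precedes it below -/
import Mathlib

section
/- In a symmetric monoidal category C satisfying the Causality axiom, every distinguishable family of states is copiable: if the states {ρ_x : I ⟶ A}_{x∈X} are distinguishable, then there exists a gate C : A ⟶ A ⊗ A such that ρ_x ≫ C = λ_I⁻¹ ≫ (ρ_x ⊗ ρ_x) for every x ∈ X. -/
open CategoryTheory CategoryTheory.Limits MonoidalCategory

universe v u

/-- A family of states `ρ : X → (𝟙_ C ⟶ A)` of an object `A` is (perfectly)
distinguishable iff for every pair of objects `B, B'` and every indexed family of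
gates `G : X → (B ⟶ B')` there is a gate `W : A ⊗ B ⟶ B'` such that
`(λ_ B).inv ≫ (ρ x ⊗ 𝟙 B) ≫ W = G x` for every `x`. -/
def Distinguishable {C : Type u} [Category.{v} C] [MonoidalCategory C]
    {X : Type} {A : C} (ρ : X → (𝟙_ C ⟶ A)) : Prop :=
  ∀ (B B' : C) (G : X → (B ⟶ B')),
    ∃ W : A ⊗ B ⟶ B', ∀ x : X, (λ_ B).inv ≫ (ρ x ⊗ₘ 𝟙 B) ≫ W = G x

/-- A family of states `ρ : X → (𝟙_ C ⟶ A)` is copiable iff there is a gate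
`c : A ⟶ A ⊗ A` with `ρ x ≫ c = (λ_ (𝟙_ C)).inv ≫ (ρ x ⊗ ρ x)` for every `x`. -/
def Copiable {C : Type u} [Category.{v} C] [MonoidalCategory C]
    {X : Type} {A : C} (ρ : X → (𝟙_ C ⟶ A)) : Prop :=
  ∃ c : A ⟶ A ⊗ A, ∀ x : X, ρ x ≫ c = (λ_ (𝟙_ C)).inv ≫ (ρ x ⊗ₘ ρ x)

/-- Program the states `σ x`, viewed as gates `𝟙_ C ⟶ B`, and precompose with `(ρ_ A).inv`. -/
theorem Distinguishable.exists_comp_eq {C : Type u} [Category.{v} C] [MonoidalCategory C]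
    {X : Type} {A : C} {ρ : X → (𝟙_ C ⟶ A)} (hρ : Distinguishable ρ)
    {B : C} (σ : X → (𝟙_ C ⟶ B)) :
    ∃ f : A ⟶ B, ∀ x : X, ρ x ≫ f = σ x := by
  obtain ⟨W, hW⟩ := hρ (𝟙_ C) B σ
  refine ⟨(ρ_ A).inv ≫ W, fun x => ?_⟩
  rw [← hW x, unitors_inv_equal, tensorHom_id, rightUnitor_inv_naturality_assoc]

theorem copiable_of_distinguishable_general {C : Type u} [Category.{v} C] [MonoidalCategory C]
    {X : Type} {A : C} (ρ : X → (𝟙_ C ⟶ A))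
    (hdist : Distinguishable ρ) :
    Copiable ρ :=
  hdist.exists_comp_eq fun x => (λ_ (𝟙_ C)).inv ≫ (ρ x ⊗ₘ ρ x)

/-- Every distinguishable family of states is copiable. -/
theorem copiable_of_distinguishable {C : Type u} [Category.{v} C] [MonoidalCategory C]
    [SymmetricCategory C] (hCaus : IsTerminal (𝟙_ C))
    {X : Type} {A : C} (ρ : X → (𝟙_ C ⟶ A))
    (hdist : Distinguishable ρ) :
    Copiable ρ :=
  copiable_of_distinguishable_general ρ hdist
end

section
/- In a symmetric monoidal category C satisfying the Causality axiom, let {ρ_x : I ⟶ A}_{x∈X} be a family of states, let C : A ⟶ A ⊗ E be a gate, and let {η_x : I ⟶ E}_{x∈X} be states such that ρ_x ≫ C = λ_I⁻¹ ≫ (ρ_x ⊗ η_x) for every x ∈ X. Then for every n ≥ 1 there exists a gate D_n : A ⟶ E^{⊗n} (where E^{⊗n} denotes the n-fold tensor power of E) such that ρ_x ≫ D_n = η_x^{⊗n} for every x ∈ X, where η_x^{⊗n} : I ⟶ E^{⊗n} denotes the n-fold tensor product state obtained from η_x (using the unitor isomorphism I ≅ I ⊗ ⋯ ⊗ I). 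-/
open CategoryTheory CategoryTheory.Limits MonoidalCategory

universe v u

variable {C : Type u} [Category.{v} C] [MonoidalCategory C]

def tensorPow (A : C) : ℕ → C
  | 0 => 𝟙_ C
  | n + 1 => tensorPow A n ⊗ A

/-- The `n`-fold tensor power of a state `σ : 𝟙_ C ⟶ A`, a state of `tensorPow A n`
(using the unitor isomorphism `𝟙_ C ≅ 𝟙_ C ⊗ ⋯ ⊗ 𝟙_ C`). -/
def statePow {A : C} (σ : 𝟙_ C ⟶ A) : (n : ℕ) → (𝟙_ C ⟶ tensorPow A n)
  | 0 => 𝟙 (𝟙_ C)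
  | n + 1 => (λ_ (𝟙_ C)).inv ≫ (statePow σ n ⊗ₘ σ)

/-- The paper's `D_n` when `t` is the trace: `c` applied `n` times to the `A`-output, then `A`
discarded. -/
def gatePow {A E : C} (t : A ⟶ 𝟙_ C) (c : A ⟶ A ⊗ E) : (n : ℕ) → (A ⟶ tensorPow E n)
  | 0 => t
  | n + 1 => c ≫ (gatePow t c n ⊗ₘ 𝟙 E)

theorem comp_gatePow {X : Type} {A E : C} {ρ : X → (𝟙_ C ⟶ A)} {t : A ⟶ 𝟙_ C}
    {c : A ⟶ A ⊗ E} {η : X → (𝟙_ C ⟶ E)} (ht : ∀ x, ρ x ≫ t = 𝟙 (𝟙_ C))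
    (hc : ∀ x, ρ x ≫ c = (λ_ (𝟙_ C)).inv ≫ (ρ x ⊗ₘ η x)) (x : X) :
    ∀ n, ρ x ≫ gatePow t c n = statePow (η x) n
  | 0 => ht x
  | n + 1 => by
    change ρ x ≫ (c ≫ (gatePow t c n ⊗ₘ 𝟙 E) : A ⟶ tensorPow E n ⊗ E) = _
    rw [reassoc_of% hc x, tensorHom_comp_tensorHom, comp_gatePow ht hc x n, Category.comp_id]
    rfl

theorem exists_gate_to_statePow_general
    (hCaus : IsTerminal (𝟙_ C))
    {X : Type} {A E : C} (ρ : X → (𝟙_ C ⟶ A)) (c : A ⟶ A ⊗ E)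
    (η : X → (𝟙_ C ⟶ E))
    (hc : ∀ x : X, ρ x ≫ c = (λ_ (𝟙_ C)).inv ≫ (ρ x ⊗ₘ η x)) :
    ∀ n : ℕ, 1 ≤ n → ∃ D : A ⟶ tensorPow E n, ∀ x : X, ρ x ≫ D = statePow (η x) n :=
  fun n _ => ⟨gatePow (hCaus.from A) c n,
    fun x => comp_gatePow (fun _ => hCaus.hom_ext _ _) hc x n⟩

/-- If a gate `c : A ⟶ A ⊗ E` generates the side information `η x` on the states
`ρ x`, then for every `n ≥ 1` there is a gate `D : A ⟶ E^{⊗ n}` with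
`ρ x ≫ D = (η x)^{⊗ n}` for every `x`. -/
theorem exists_gate_to_statePow [SymmetricCategory C]
    (hCaus : IsTerminal (𝟙_ C))
    {X : Type} {A E : C} (ρ : X → (𝟙_ C ⟶ A)) (c : A ⟶ A ⊗ E)
    (η : X → (𝟙_ C ⟶ E))
    (hc : ∀ x : X, ρ x ≫ c = (λ_ (𝟙_ C)).inv ≫ (ρ x ⊗ₘ η x)) :
    ∀ n : ℕ, 1 ≤ n → ∃ D : A ⟶ tensorPow E n, ∀ x : X, ρ x ≫ D = statePow (η x) n :=
  exists_gate_to_statePow_general hCaus ρ c η hc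
end

section
/- In a symmetric monoidal category C satisfying the Causality axiom, the tensor product of two pure states is a pure state: if α : I ⟶ A and β : I ⟶ B are pure states, then the state λ_I⁻¹ ≫ (α ⊗ β) : I ⟶ A ⊗ B is pure. -/
/-!
Let `σ` be a state of `(A ⊗ B) ⊗ E` whose marginal on `A ⊗ B` is `α ⊗ β`. Reassociated to
`A ⊗ (B ⊗ E)`, its marginal on `A` is `α`, so purity of `α` splits it as `α ⊗ τ`. Discarding `A`
shows that the marginal of `τ` on `B` is `β`, so purity of `β` splits `τ` as `β ⊗ γ`, and
`σ = (α ⊗ β) ⊗ γ`.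
-/

open CategoryTheory CategoryTheory.Limits MonoidalCategory

universe v u

variable {C : Type u} [Category.{v} C] [MonoidalCategory C]

/-- A state `α : 𝟙_ C ⟶ A` is pure iff it has only trivial extensions: every state
`σ : 𝟙_ C ⟶ A ⊗ B` whose marginal on `A` (obtained by discarding `B` with the
trace `hCaus.from B`) equals `α` factors as `σ = (λ_ (𝟙_ C)).inv ≫ (α ⊗ β)` for
some state `β : 𝟙_ C ⟶ B`. -/
def IsPureState (hCaus : IsTerminal (𝟙_ C)) {A : C} (α : 𝟙_ C ⟶ A) : Prop :=
  ∀ (B : C) (σ : 𝟙_ C ⟶ A ⊗ B),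
    σ ≫ (𝟙 A ⊗ₘ hCaus.from B) ≫ (ρ_ A).hom = α →
      ∃ β : 𝟙_ C ⟶ B, σ = (λ_ (𝟙_ C)).inv ≫ (α ⊗ₘ β)

section Marginal

variable (hCaus : IsTerminal (𝟙_ C)) {A B E : C}

def marginalLeft (σ : 𝟙_ C ⟶ A ⊗ B) : 𝟙_ C ⟶ A :=
  σ ≫ (𝟙 A ⊗ₘ hCaus.from B) ≫ (ρ_ A).hom

def marginalRight (σ : 𝟙_ C ⟶ A ⊗ B) : 𝟙_ C ⟶ B :=
  σ ≫ (hCaus.from A ⊗ₘ 𝟙 B) ≫ (λ_ B).hom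

lemma marginalLeft_tensor (α : 𝟙_ C ⟶ A) (β : 𝟙_ C ⟶ B) :
    marginalLeft hCaus ((λ_ (𝟙_ C)).inv ≫ (α ⊗ₘ β)) = α := by
  rw [marginalLeft, Category.assoc, tensorHom_comp_tensorHom_assoc, Category.comp_id,
    hCaus.hom_ext (β ≫ hCaus.from B) (𝟙 _)]
  monoidal

lemma marginalRight_tensor (α : 𝟙_ C ⟶ A) (β : 𝟙_ C ⟶ B) :
    marginalRight hCaus ((λ_ (𝟙_ C)).inv ≫ (α ⊗ₘ β)) = β := by
  rw [marginalRight, Category.assoc, tensorHom_comp_tensorHom_assoc, Category.comp_id,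
    hCaus.hom_ext (α ≫ hCaus.from A) (𝟙 _)]
  monoidal

lemma marginalLeft_assoc_hom (σ : 𝟙_ C ⟶ (A ⊗ B) ⊗ E) :
    marginalLeft hCaus (σ ≫ (α_ A B E).hom) = marginalLeft hCaus (marginalLeft hCaus σ) := by
  rw [marginalLeft, marginalLeft, marginalLeft,
    hCaus.hom_ext (hCaus.from (B ⊗ E)) (B ◁ hCaus.from E ≫ (ρ_ B).hom ≫ hCaus.from B)]
  monoidal

lemma marginalLeft_marginalRight_assoc_hom (σ : 𝟙_ C ⟶ (A ⊗ B) ⊗ E) :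
    marginalLeft hCaus (marginalRight hCaus (σ ≫ (α_ A B E).hom)) =
      marginalRight hCaus (marginalLeft hCaus σ) := by
  simp only [marginalLeft, marginalRight, Category.assoc, id_tensorHom, tensorHom_id]
  -- move the discarding of `E` to the front on both sides; what remains is coherence
  rw [← leftUnitor_naturality_assoc, ← whisker_exchange_assoc,
    ← associator_naturality_right_assoc]
  monoidal

end Marginal

lemma leftUnitor_inv_tensorHom_assoc_inv {A B E : C} (α : 𝟙_ C ⟶ A) (β : 𝟙_ C ⟶ B)
    (γ : 𝟙_ C ⟶ E) :
    ((λ_ (𝟙_ C)).inv ≫ (α ⊗ₘ ((λ_ (𝟙_ C)).inv ≫ (β ⊗ₘ γ)))) ≫ (α_ A B E).inv =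
      (λ_ (𝟙_ C)).inv ≫ (((λ_ (𝟙_ C)).inv ≫ (α ⊗ₘ β)) ⊗ₘ γ) := by
  monoidal

theorem isPureState_tensor_general (hCaus : IsTerminal (𝟙_ C))
    {A B : C} (α : 𝟙_ C ⟶ A) (β : 𝟙_ C ⟶ B)
    (hα : IsPureState hCaus α) (hβ : IsPureState hCaus β) :
    IsPureState hCaus ((λ_ (𝟙_ C)).inv ≫ (α ⊗ₘ β)) := by
  rintro E σ (hσ : marginalLeft hCaus σ = (λ_ (𝟙_ C)).inv ≫ (α ⊗ₘ β))
  have hσA : marginalLeft hCaus (σ ≫ (α_ A B E).hom) = α := by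
    rw [marginalLeft_assoc_hom, hσ, marginalLeft_tensor]
  obtain ⟨τ, hτ⟩ := hα (B ⊗ E) _ hσA
  have hτB : marginalLeft hCaus τ = β := by
    rw [← marginalRight_tensor hCaus α τ, ← hτ, marginalLeft_marginalRight_assoc_hom, hσ,
      marginalRight_tensor]
  obtain ⟨γ, hγ⟩ := hβ E τ hτB
  refine ⟨γ, ?_⟩
  rw [← leftUnitor_inv_tensorHom_assoc_inv, ← hγ, ← hτ, Category.assoc, Iso.hom_inv_id,
    Category.comp_id]

/-- The tensor product of two pure states is a pure state. -/
theorem isPureState_tensor [SymmetricCategory C] (hCaus : IsTerminal (𝟙_ C))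
    {A B : C} (α : 𝟙_ C ⟶ A) (β : 𝟙_ C ⟶ B)
    (hα : IsPureState hCaus α) (hβ : IsPureState hCaus β) :
    IsPureState hCaus ((λ_ (𝟙_ C)).inv ≫ (α ⊗ₘ β)) :=
  isPureState_tensor_general hCaus α β hα hβ
end
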